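/- Let G = (V, E) be a finite digraph, s, t ∈ V with s ≠ t, and let P be a set of pairwise edge-disjoint directed paths from s to t. Then P has maximum cardinality among all sets of pairwise edge-disjoint s–t paths in G if and only if the residual digraph of G with respect to P contains no directed path from s to t. -/

import Mathlib

/-- The list of arcs traversed by a path given as a list of vertices. -/
def pathArcs {V : Type*} (p : List V) : List (V × V) := p.zip p.tail

/-- `p` is a directed path from `s` to `t` in the digraph with arc set `E`:
a nonempty list of pairwise distinct vertices, starting at `s`, ending at `t`,
with consecutive vertices joined by arcs of `E`. -/
def IsPath {V : Type*} (E : Finset (V × V)) (s t : V) (p : List V) : Prop :=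
  p.Nodup ∧ p.Chain' (fun u v => (u, v) ∈ E) ∧ p.head? = some s ∧ p.getLast? = some t

/-- Two paths are edge-disjoint if they share no arc. -/
def EdgeDisjoint {V : Type*} (p q : List V) : Prop :=
  ∀ a : V × V, a ∈ pathArcs p → a ∉ pathArcs q

/-- Two `s`–`t` paths are internally node-disjoint if the only vertices they share
are `s` and `t`. -/
def IntDisjoint {V : Type*} (s t : V) (p q : List V) : Prop :=
  ∀ v : V, v ∈ p → v ∈ q → v = s ∨ v = t

/-- `P` is a set of pairwise edge-disjoint directed paths from `s` to `t`. -/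
def IsEdgeDisjointFamily {V : Type*} (E : Finset (V × V)) (s t : V)
    (P : Finset (List V)) : Prop :=
  (∀ p ∈ P, IsPath E s t p) ∧ (P : Set (List V)).Pairwise EdgeDisjoint

/-- `P` is a set of pairwise internally node-disjoint directed paths from `s` to `t`. -/
def IsNodeDisjointFamily {V : Type*} (E : Finset (V × V)) (s t : V)
    (P : Finset (List V)) : Prop :=
  (∀ p ∈ P, IsPath E s t p) ∧ (P : Set (List V)).Pairwise (IntDisjoint s t)

/-- The flow-arcs: arcs used by some path of `P`. -/
def flowArcs {V : Type*} [DecidableEq V] (P : Finset (List V)) : Finset (V × V) :=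
  P.biUnion (fun p => (pathArcs p).toFinset)

/-- The arc set of the residualArcs digraph of `E` with respect to the path set `P`:
all arcs of `E` that are not flow-arcs, together with the reversals of all flow-arcs. -/
def residualArcs {V : Type*} [DecidableEq V] (E : Finset (V × V)) (P : Finset (List V)) :
    Finset (V × V) :=
  (E \ flowArcs P) ∪ (flowArcs P).image (fun a => (a.2, a.1))

/-!
Everything is counted through the net outflow `v ↦ outdeg v - indeg v` of an arc set. The arcs
of `k` edge-disjoint `s`–`t` paths have net outflow `k • (δₛ - δₜ)`, and conversely an arc set with
this net outflow splits into `k` edge-disjoint `s`–`t` paths, peeled off one at a time. Augmenting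
the flow-arcs along an `s`–`t` path of the residual digraph adds `δₛ - δₜ` to the net outflow, so it
produces `|P| + 1` paths. If there is no such path, let `R` be the set of vertices reachable from
`s` in the residual digraph: every arc of `E` leaving `R` is a flow-arc and no flow-arc enters `R`,
so `|P|` is the number of arcs of `E` leaving `R`, which bounds the size of every family, since
each of its paths leaves `R` through an arc of its own.
-/

open Finset

section

variable {V : Type*}

lemma pathArcs_cons_cons (a b : V) (l : List V) :
    pathArcs (a :: b :: l) = (a, b) :: pathArcs (b :: l) := rfl

lemma rel_of_mem_pathArcs {R : V → V → Prop} {p : List V} (hp : p.IsChain R) {a : V × V}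
    (ha : a ∈ pathArcs p) : R a.1 a.2 := by
  match p, hp with
  | [], _ => simp [pathArcs] at ha
  | [_], _ => simp [pathArcs] at ha
  | x :: y :: l, .cons_cons hxy hl =>
    rcases List.mem_cons.1 ha with rfl | ha
    exacts [hxy, rel_of_mem_pathArcs hl ha]

lemma nodup_pathArcs {p : List V} (hp : p.Nodup) : (pathArcs p).Nodup := by
  refine List.Nodup.of_map Prod.snd ?_
  rw [pathArcs, List.map_snd_zip (by simp)]
  exact hp.sublist (List.tail_sublist p)

lemma sum_map_pathArcs_sub {G : Type*} [AddCommGroup G] (f : V → G) (x : V) (l : List V) :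
    ((pathArcs (x :: l)).map fun a => f a.1 - f a.2).sum
      = f x - f ((x :: l).getLast (List.cons_ne_nil x l)) := by
  induction l generalizing x with
  | nil => simp [pathArcs]
  | cons y l ih =>
    rw [pathArcs_cons_cons, List.map_cons, List.sum_cons, ih, List.getLast_cons_cons]
    abel

section IsPath

variable {E : Finset (V × V)} {s t : V} {p : List V}

lemma IsPath.mem_of_mem_pathArcs (hp : IsPath E s t p) {a : V × V} (ha : a ∈ pathArcs p) :
    a ∈ E :=
  rel_of_mem_pathArcs (R := fun u v => (u, v) ∈ E) hp.2.1 ha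

lemma IsPath.mono {E' : Finset (V × V)} (hp : IsPath E s t p) (hE : E ⊆ E') : IsPath E' s t p :=
  ⟨hp.1, hp.2.1.imp fun _ _ h => hE h, hp.2.2⟩

lemma IsPath.pathArcs_ne_nil (hp : IsPath E s t p) (hst : s ≠ t) : pathArcs p ≠ [] := by
  obtain ⟨-, -, hs, ht⟩ := hp
  match p with
  | [] => simp at hs
  | [_] => simp_all
  | _ :: _ :: _ => simp [pathArcs_cons_cons]

lemma isPath_singleton (s : V) : IsPath E s s [s] :=
  ⟨List.nodup_singleton s, List.isChain_singleton s, rfl, rfl⟩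

/-- A path to `v` followed by an arc `(v, w)` yields a path to `w`: either append `w`, or, if `w`
was already visited, cut the path at `w`. -/
lemma IsPath.exists_isPath_of_arc_mem {v w : V} (hp : IsPath E s v p) (hvw : (v, w) ∈ E) :
    ∃ q, IsPath E s w q := by
  obtain ⟨hnd, hch, hs, hv⟩ := hp
  by_cases hw : w ∈ p
  · obtain ⟨l₁, l₂, rfl⟩ := List.append_of_mem hw
    have hpre : l₁ ++ [w] <+: l₁ ++ w :: l₂ := by simp
    refine ⟨l₁ ++ [w], hnd.sublist hpre.sublist, hch.prefix hpre, ?_, List.getLast?_concat⟩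
    cases l₁ <;> simp_all
  · have hne : p ≠ [] := by rintro rfl; simp at hs
    refine ⟨p ++ [w], ?_, ?_, by rw [List.head?_append_of_ne_nil _ hne, hs],
      List.getLast?_concat⟩
    · exact List.nodup_append.2 ⟨hnd, List.nodup_singleton w, fun a ha b hb hab =>
        hw (by simp_all)⟩
    · exact List.isChain_append.2 ⟨hch, List.isChain_singleton w, by simp_all⟩

end IsPath

lemma EdgeDisjoint.symm {p q : List V} (h : EdgeDisjoint p q) : EdgeDisjoint q p :=
  fun a haq hap => h a hap haq

lemma IsEdgeDisjointFamily.mono {E E' : Finset (V × V)} {s t : V} {P : Finset (List V)}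
    (hP : IsEdgeDisjointFamily E s t P) (hE : E ⊆ E') : IsEdgeDisjointFamily E' s t P :=
  ⟨fun p hp => (hP.1 p hp).mono hE, hP.2⟩

variable [DecidableEq V]

def netOutflow (F : Finset (V × V)) : V → ℤ :=
  ∑ a ∈ F, (Pi.single a.1 1 - Pi.single a.2 1)

section netOutflow

variable {F G : Finset (V × V)}

lemma netOutflow_union (h : Disjoint F G) :
    netOutflow (F ∪ G) = netOutflow F + netOutflow G :=
  sum_union h

lemma netOutflow_sdiff (h : G ⊆ F) : netOutflow (F \ G) = netOutflow F - netOutflow G :=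
  sum_sdiff_eq_sub h

lemma netOutflow_sdiff_eq_sub_inter (F G : Finset (V × V)) :
    netOutflow (F \ G) = netOutflow F - netOutflow (F ∩ G) :=
  eq_sub_of_add_eq' (sum_inter_add_sum_sdiff F G _)

lemma netOutflow_image_swap (F : Finset (V × V)) :
    netOutflow (F.image Prod.swap) = -netOutflow F := by
  rw [netOutflow, sum_image Prod.swap_injective.injOn, netOutflow, ← sum_neg_distrib]
  simp

lemma IsPath.netOutflow_pathArcs {E : Finset (V × V)} {s t : V} {p : List V}
    (hp : IsPath E s t p) : netOutflow (pathArcs p).toFinset = Pi.single s 1 - Pi.single t 1 := by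
  obtain ⟨hnd, -, hs, ht⟩ := hp
  rw [netOutflow, List.sum_toFinset _ (nodup_pathArcs hnd)]
  match p with
  | [] => simp at hs
  | x :: l =>
    obtain rfl : x = s := by simpa using hs
    rw [sum_map_pathArcs_sub (fun v => (Pi.single v 1 : V → ℤ)),
      (List.getLast_eq_iff_getLast?_eq_some _).2 ht]

lemma IsEdgeDisjointFamily.netOutflow_flowArcs {E : Finset (V × V)} {s t : V}
    {P : Finset (List V)} (hP : IsEdgeDisjointFamily E s t P) :
    netOutflow (flowArcs P) = P.card • (Pi.single s 1 - Pi.single t 1) := by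
  have hdisj : (P : Set (List V)).PairwiseDisjoint fun p => (pathArcs p).toFinset :=
    fun p hp q hq hpq => disjoint_left.2 fun a hap haq =>
      hP.2 hp hq hpq a (List.mem_toFinset.1 hap) (List.mem_toFinset.1 haq)
  rw [flowArcs, netOutflow, sum_biUnion hdisj, ← sum_const]
  exact sum_congr rfl fun p hp => (hP.1 p hp).netOutflow_pathArcs

end netOutflow

def augment (F A : Finset (V × V)) : Finset (V × V) :=
  (F \ A.image Prod.swap) ∪ (A \ F.image Prod.swap)

lemma netOutflow_augment {F A : Finset (V × V)} (h : Disjoint F (A \ F.image Prod.swap)) :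
    netOutflow (augment F A) = netOutflow F + netOutflow A := by
  have hswap : F ∩ A.image Prod.swap = (A ∩ F.image Prod.swap).image Prod.swap := by
    rw [image_inter _ _ Prod.swap_injective, image_image, Prod.swap_swap_eq, image_id, inter_comm]
  rw [augment, netOutflow_union (disjoint_of_subset_left sdiff_subset h),
    netOutflow_sdiff_eq_sub_inter, netOutflow_sdiff_eq_sub_inter A, hswap, netOutflow_image_swap]
  abel

def leavingArcs (F : Finset (V × V)) (S : Finset V) : Finset (V × V) :=
  F.filter fun a => a.1 ∈ S ∧ a.2 ∉ S

lemma leavingArcs_mono {F G : Finset (V × V)} (S : Finset V) (h : F ⊆ G) :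
    leavingArcs F S ⊆ leavingArcs G S :=
  filter_subset_filter _ h

def enteringArcs (F : Finset (V × V)) (S : Finset V) : Finset (V × V) :=
  F.filter fun a => a.1 ∉ S ∧ a.2 ∈ S

lemma sum_netOutflow_eq_card_sub_card (F : Finset (V × V)) (S : Finset V) :
    ∑ v ∈ S, netOutflow F v = #(leavingArcs F S) - #(enteringArcs F S) := by
  simp only [netOutflow, Finset.sum_apply, Pi.sub_apply]
  rw [sum_comm]
  simp only [sum_sub_distrib, sum_pi_single', leavingArcs, enteringArcs, natCast_card_filter]
  rw [← sum_sub_distrib, ← sum_sub_distrib]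
  refine sum_congr rfl fun a _ => ?_
  split_ifs <;> simp_all

lemma sum_netOutflow_of_eq_nsmul {F : Finset (V × V)} {S : Finset V} {s t : V} {k : ℕ}
    (h : netOutflow F = k • (Pi.single s 1 - Pi.single t 1)) (hs : s ∈ S) (ht : t ∉ S) :
    ∑ v ∈ S, netOutflow F v = k := by
  simp [h, ← mul_sum, sum_sub_distrib, sum_pi_single', hs, ht]

open scoped Classical in
noncomputable def reachSet (F : Finset (V × V)) (s : V) : Finset V :=
  (insert s (F.image Prod.snd)).filter fun v => ∃ p, IsPath F s v p

section reachSet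

variable {F : Finset (V × V)} {s : V}

lemma start_mem_reachSet : s ∈ reachSet F s := by
  classical exact mem_filter.2 ⟨mem_insert_self s _, [s], isPath_singleton s⟩

lemma exists_isPath_of_mem_reachSet {v : V} (hv : v ∈ reachSet F s) : ∃ p, IsPath F s v p := by
  classical exact (mem_filter.1 hv).2

lemma snd_mem_reachSet {a : V × V} (ha : a ∈ F) (h : a.1 ∈ reachSet F s) :
    a.2 ∈ reachSet F s := by
  obtain ⟨p, hp⟩ := exists_isPath_of_mem_reachSet h
  classical
  exact mem_filter.2 ⟨mem_insert_of_mem (mem_image_of_mem _ ha), hp.exists_isPath_of_arc_mem ha⟩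

lemma leavingArcs_reachSet : leavingArcs F (reachSet F s) = ∅ :=
  filter_false_of_mem fun _ ha h => h.2 (snd_mem_reachSet ha h.1)

end reachSet

variable {s t : V}

lemma exists_isPath_of_netOutflow_eq {F : Finset (V × V)} {k : ℕ}
    (h : netOutflow F = (k + 1) • (Pi.single s 1 - Pi.single t 1)) : ∃ p, IsPath F s t p := by
  by_contra hno
  have ht : t ∉ reachSet F s := fun ht => hno (exists_isPath_of_mem_reachSet ht)
  have := sum_netOutflow_of_eq_nsmul h start_mem_reachSet ht
  rw [sum_netOutflow_eq_card_sub_card, leavingArcs_reachSet, card_empty] at this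
  omega

theorem exists_isEdgeDisjointFamily_of_netOutflow_eq (hst : s ≠ t) (k : ℕ) (F : Finset (V × V))
    (h : netOutflow F = k • (Pi.single s 1 - Pi.single t 1)) :
    ∃ Q : Finset (List V), Q.card = k ∧ IsEdgeDisjointFamily F s t Q := by
  induction k generalizing F with
  | zero => exact ⟨∅, rfl, by simp, by simp⟩
  | succ k ih =>
    obtain ⟨p, hp⟩ := exists_isPath_of_netOutflow_eq h
    set A := (pathArcs p).toFinset
    have hAF : A ⊆ F := fun a ha => hp.mem_of_mem_pathArcs (List.mem_toFinset.1 ha)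
    obtain ⟨Q, hQk, hQ⟩ := ih (F \ A) (by
      rw [netOutflow_sdiff hAF, h, hp.netOutflow_pathArcs, succ_nsmul, add_sub_cancel_right])
    have hdisj : ∀ q ∈ Q, EdgeDisjoint p q := fun q hq a hap haq =>
      (mem_sdiff.1 ((hQ.1 q hq).mem_of_mem_pathArcs haq)).2 (List.mem_toFinset.2 hap)
    have hpQ : p ∉ Q := fun hpQ => by
      obtain ⟨a, ha⟩ := List.exists_mem_of_ne_nil _ (hp.pathArcs_ne_nil hst)
      exact hdisj p hpQ a ha ha
    refine ⟨insert p Q, by rw [card_insert_of_notMem hpQ, hQk], ?_, ?_⟩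
    · intro q hq
      rcases mem_insert.1 hq with rfl | hq
      exacts [hp, (hQ.1 q hq).mono sdiff_subset]
    · rw [coe_insert, Set.pairwise_insert]
      exact ⟨hQ.2, fun q hq _ => ⟨hdisj q hq, (hdisj q hq).symm⟩⟩

lemma residualArcs_eq (E : Finset (V × V)) (P : Finset (List V)) :
    residualArcs E P = (E \ flowArcs P) ∪ (flowArcs P).image Prod.swap :=
  rfl

lemma IsEdgeDisjointFamily.flowArcs_subset {E : Finset (V × V)} {P : Finset (List V)}
    (hP : IsEdgeDisjointFamily E s t P) : flowArcs P ⊆ E := by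
  intro a ha
  obtain ⟨p, hp, hap⟩ := mem_biUnion.1 ha
  exact (hP.1 p hp).mem_of_mem_pathArcs (List.mem_toFinset.1 hap)

lemma IsEdgeDisjointFamily.exists_card_succ {E : Finset (V × V)} {P : Finset (List V)}
    (hst : s ≠ t) (hP : IsEdgeDisjointFamily E s t P) {α : List V}
    (hα : IsPath (residualArcs E P) s t α) :
    ∃ Q : Finset (List V), Q.card = P.card + 1 ∧ IsEdgeDisjointFamily E s t Q := by
  set F := flowArcs P
  set A := (pathArcs α).toFinset
  have hforward : A \ F.image Prod.swap ⊆ E \ F := fun a ha => by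
    have := hα.mem_of_mem_pathArcs (List.mem_toFinset.1 (mem_sdiff.1 ha).1)
    rw [residualArcs_eq, mem_union] at this
    exact this.resolve_right (mem_sdiff.1 ha).2
  have hflow : netOutflow (augment F A) = (P.card + 1) • (Pi.single s 1 - Pi.single t 1) := by
    rw [netOutflow_augment (disjoint_of_subset_right hforward disjoint_sdiff),
      hP.netOutflow_flowArcs, hα.netOutflow_pathArcs, succ_nsmul]
  obtain ⟨Q, hQ, hQfam⟩ := exists_isEdgeDisjointFamily_of_netOutflow_eq hst _ _ hflow
  refine ⟨Q, hQ, hQfam.mono (union_subset ?_ ?_)⟩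
  · exact sdiff_subset.trans hP.flowArcs_subset
  · exact hforward.trans sdiff_subset

lemma IsEdgeDisjointFamily.card_le_card_leavingArcs {E : Finset (V × V)} {Q : Finset (List V)}
    {S : Finset V} (hQ : IsEdgeDisjointFamily E s t Q) (hs : s ∈ S) (ht : t ∉ S) :
    Q.card ≤ #(leavingArcs E S) := by
  have hval := sum_netOutflow_of_eq_nsmul hQ.netOutflow_flowArcs hs ht
  have hcut := card_le_card (leavingArcs_mono S hQ.flowArcs_subset)
  rw [sum_netOutflow_eq_card_sub_card] at hval
  omega

/-- The cut is saturated: every arc of `E` leaving `S` is a flow-arc, and no flow-arc enters `S`. -/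
lemma IsEdgeDisjointFamily.card_leavingArcs_eq {E : Finset (V × V)} {P : Finset (List V)}
    {S : Finset V} (hP : IsEdgeDisjointFamily E s t P) (hs : s ∈ S) (ht : t ∉ S)
    (hS : ∀ a ∈ residualArcs E P, a.1 ∈ S → a.2 ∈ S) : #(leavingArcs E S) = P.card := by
  have hval := sum_netOutflow_of_eq_nsmul hP.netOutflow_flowArcs hs ht
  have hleave : leavingArcs (flowArcs P) S = leavingArcs E S := by
    refine subset_antisymm (leavingArcs_mono S hP.flowArcs_subset) fun a ha => ?_
    obtain ⟨haE, ha1, ha2⟩ := mem_filter.1 ha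
    refine mem_filter.2 ⟨?_, ha1, ha2⟩
    by_contra hnf
    refine ha2 (hS a ?_ ha1)
    rw [residualArcs_eq]
    exact mem_union_left _ (mem_sdiff.2 ⟨haE, hnf⟩)
  have henter : enteringArcs (flowArcs P) S = ∅ := by
    refine filter_false_of_mem fun a ha h => h.1 (hS a.swap ?_ h.2)
    rw [residualArcs_eq]
    exact mem_union_right _ (mem_image_of_mem _ ha)
  rw [sum_netOutflow_eq_card_sub_card, hleave, henter, card_empty] at hval
  omega

end

theorem max_family_iff_no_augmenting_path_general {V : Type*} [DecidableEq V]
    (E : Finset (V × V)) (s t : V) (hst : s ≠ t)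
    (P : Finset (List V)) (hP : IsEdgeDisjointFamily E s t P) :
    (∀ Q : Finset (List V), IsEdgeDisjointFamily E s t Q → Q.card ≤ P.card) ↔
      ¬ ∃ α : List V, IsPath (residualArcs E P) s t α := by
  constructor
  · rintro hmax ⟨α, hα⟩
    obtain ⟨Q, hQ, hQfam⟩ := hP.exists_card_succ hst hα
    have := hmax Q hQfam
    omega
  · intro hno Q hQ
    set R := reachSet (residualArcs E P) s
    have ht : t ∉ R := fun ht => hno (exists_isPath_of_mem_reachSet ht)
    calc Q.card ≤ #(leavingArcs E R) := hQ.card_le_card_leavingArcs start_mem_reachSet ht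
      _ = P.card := hP.card_leavingArcs_eq start_mem_reachSet ht fun a ha => snd_mem_reachSet ha

/-- A set `P` of pairwise edge-disjoint `s`–`t` paths has maximum cardinality among all
such sets if and only if the residual digraph of `G` with respect to `P` contains no
directed path from `s` to `t`. -/
theorem max_family_iff_no_augmenting_path {V : Type*} [Fintype V] [DecidableEq V]
    (E : Finset (V × V)) (s t : V) (hst : s ≠ t)
    (P : Finset (List V)) (hP : IsEdgeDisjointFamily E s t P) :
    (∀ Q : Finset (List V), IsEdgeDisjointFamily E s t Q → Q.card ≤ P.card) ↔
      ¬ ∃ α : List V, IsPath (residualArcs E P) s t α :=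
  max_family_iff_no_augmenting_path_general E s t hst P hP
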